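/- If nonzero vectors u, v ∈ F[x]^{ℓ+1} have distinct leading positions and p, q ∈ F[x] are nonzero, then p·u + q·v ≠ 0, and if moreover LP(p·u) ≠ LP(q·v) then LP(p·u + q·v) equals the leading position of whichever of p·u, q·v has the larger value val, where val(w) = (ℓ+1)·deg w + LP(w). -/

import Mathlib

open Polynomial

noncomputable section

variable {F : Type*} [Field F]

/-- The degree of a vector of polynomials: maximum of the coordinate degrees. -/
def vecDeg {n : ℕ} (v : Fin n → Polynomial F) : WithBot ℕ :=
  Finset.univ.sup fun j => (v j).degree

/-- The degree of a vector, as a natural number. -/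
def vecDegNat {n : ℕ} (v : Fin n → Polynomial F) : ℕ :=
  Finset.univ.sup fun j => (v j).natDegree

/-- The leading position of a vector: the largest index attaining the degree. -/
def leadPos {n : ℕ} (v : Fin n → Polynomial F) : ℕ :=
  (Finset.univ.filter fun j => (v j).degree = vecDeg v).sup fun j => (j : ℕ)

/-- The value function val(v) = n * deg v + LP(v). -/
def vecVal {n : ℕ} (v : Fin n → Polynomial F) : ℕ :=
  n * vecDegNat v + leadPos v

/-- The weight-embedding map Φ. -/
def PhiW (ν : ℕ) {n : ℕ} (w : Fin n → ℕ) (v : Fin n → Polynomial F) :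
    Fin n → Polynomial F :=
  fun j => X ^ (w j) * (Polynomial.expand F ν (v j))

/-- The rows of the canonical basis matrix M. -/
def rowBasisM (ℓ : ℕ) (S G : Fin ℓ → Polynomial F) :
    Fin (ℓ+1) → Fin (ℓ+1) → Polynomial F :=
  fun i => Fin.cases (Fin.cons 1 S) (fun i' => fun j => if j = i'.succ then G i' else 0) i


/-!
Since `leadPos w < n` for `w ≠ 0`, `vecVal w` encodes the pair `(deg w, LP w)` in base `n`:
comparing values is comparing degrees, then leading positions, and `LP w = vecVal w % n`.
So the hypothesis `LP u ≠ LP v` makes the values of `p • u` and `q • v` distinct. If `b` has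
the smaller value, then at the leading position `i` of `a` the entry `b i` has degree below
`deg a`, as do all entries of `a` and `b` beyond `i`; hence `a + b` has entry `i` of degree
`deg a` (so it is nonzero) and leading position `i`.
-/

variable {n : ℕ}

lemma degree_le_vecDeg (v : Fin n → F[X]) (j : Fin n) : (v j).degree ≤ vecDeg v :=
  Finset.le_sup (f := fun j => (v j).degree) (Finset.mem_univ j)

lemma vecDeg_ne_bot {v : Fin n → F[X]} (hv : v ≠ 0) : vecDeg v ≠ ⊥ := by
  obtain ⟨j, hj⟩ := Function.ne_iff.mp hv
  simpa [vecDeg, Finset.sup_eq_bot_iff] using ⟨j, hj⟩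

lemma le_leadPos {v : Fin n → F[X]} {j : Fin n} (hj : (v j).degree = vecDeg v) :
    (j : ℕ) ≤ leadPos v :=
  Finset.le_sup (f := fun j : Fin n => (j : ℕ)) (Finset.mem_filter.mpr ⟨Finset.mem_univ j, hj⟩)

lemma degree_lt_vecDeg_of_leadPos_lt {v : Fin n → F[X]} {j : Fin n} (hj : leadPos v < j) :
    (v j).degree < vecDeg v :=
  (degree_le_vecDeg v j).lt_of_ne fun h => (le_leadPos h).not_gt hj

lemma exists_index_eq_leadPos {v : Fin n → F[X]} (hv : v ≠ 0) :
    ∃ i : Fin n, (i : ℕ) = leadPos v ∧ (v i).degree = vecDeg v := by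
  obtain ⟨j, hj⟩ := Function.ne_iff.mp hv
  obtain ⟨k, -, hk⟩ :=
    Finset.exists_mem_eq_sup Finset.univ ⟨j, Finset.mem_univ j⟩ fun j => (v j).degree
  obtain ⟨i, hi, hiLP⟩ := Finset.exists_mem_eq_sup
    (Finset.univ.filter fun j => (v j).degree = vecDeg v)
    ⟨k, Finset.mem_filter.mpr ⟨Finset.mem_univ k, hk.symm⟩⟩ fun j : Fin n => (j : ℕ)
  exact ⟨i, hiLP.symm, (Finset.mem_filter.mp hi).2⟩

lemma leadPos_lt {v : Fin n → F[X]} (hv : v ≠ 0) : leadPos v < n := by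
  obtain ⟨i, hi, -⟩ := exists_index_eq_leadPos hv
  exact hi ▸ i.isLt

lemma leadPos_eq_of_degree_lt {w : Fin n → F[X]} {D : WithBot ℕ} {i : Fin n}
    (hle : ∀ j, (w j).degree ≤ D) (hi : (w i).degree = D) (hlt : ∀ j, i < j → (w j).degree < D) :
    leadPos w = i := by
  have hdeg : vecDeg w = D :=
    le_antisymm (Finset.sup_le fun j _ => hle j) (hi ▸ degree_le_vecDeg w i)
  refine le_antisymm (Finset.sup_le fun j hj => ?_) (le_leadPos (hi.trans hdeg.symm))
  by_contra! hij
  exact (hlt j hij).ne ((Finset.mem_filter.mp hj).2.trans hdeg)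

lemma leadPos_smul {p : F[X]} (hp : p ≠ 0) {v : Fin n → F[X]} (hv : v ≠ 0) :
    leadPos (p • v) = leadPos v := by
  obtain ⟨i, hiLP, hi⟩ := exists_index_eq_leadPos hv
  have hp' : p.degree ≠ ⊥ := degree_ne_bot.mpr hp
  rw [← hiLP]
  refine leadPos_eq_of_degree_lt (D := p.degree + vecDeg v) (fun j => ?_) ?_ fun j hj => ?_
  · simpa [degree_mul] using add_le_add_right (degree_le_vecDeg v j) p.degree
  · simp [degree_mul, hi]
  · simpa [degree_mul] using
      WithBot.add_lt_add_left hp' (degree_lt_vecDeg_of_leadPos_lt (hiLP ▸ hj))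

lemma vecDeg_eq_vecDegNat {v : Fin n → F[X]} (hv : v ≠ 0) : vecDeg v = vecDegNat v := by
  obtain ⟨d, hd⟩ := WithBot.ne_bot_iff_exists.mp (vecDeg_ne_bot hv)
  obtain ⟨i, -, hi⟩ := exists_index_eq_leadPos hv
  have hnat : vecDegNat v = d := by
    refine le_antisymm (Finset.sup_le fun j _ => ?_) ?_
    · exact natDegree_le_iff_degree_le.mpr ((degree_le_vecDeg v j).trans hd.ge)
    · rw [← natDegree_eq_of_degree_eq_some (hi.trans hd.symm)]
      exact Finset.le_sup (f := fun j => (v j).natDegree) (Finset.mem_univ i)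
  rw [← hd, hnat]
  rfl

lemma vecVal_mod {v : Fin n → F[X]} (hv : v ≠ 0) : vecVal v % n = leadPos v :=
  (Nat.mul_add_mod _ _ _).trans (Nat.mod_eq_of_lt (leadPos_lt hv))

lemma vecVal_div {v : Fin n → F[X]} (hv : v ≠ 0) : vecVal v / n = vecDegNat v := by
  rw [vecVal, Nat.mul_add_div (Nat.zero_lt_of_lt (leadPos_lt hv)),
    Nat.div_eq_of_lt (leadPos_lt hv), add_zero]

lemma vecDeg_lt_or_leadPos_lt_of_vecVal_lt {a b : Fin n → F[X]} (ha : a ≠ 0) (hb : b ≠ 0)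
    (h : vecVal b < vecVal a) :
    vecDeg b < vecDeg a ∨ (vecDeg b = vecDeg a ∧ leadPos b < leadPos a) := by
  have hdeg : vecDegNat b ≤ vecDegNat a := by
    rw [← vecVal_div ha, ← vecVal_div hb]
    exact Nat.div_le_div_right h.le
  rw [vecDeg_eq_vecDegNat ha, vecDeg_eq_vecDegNat hb, Nat.cast_lt, Nat.cast_inj]
  rcases hdeg.lt_or_eq with hlt | heq
  · exact Or.inl hlt
  · refine Or.inr ⟨heq, ?_⟩
    rw [vecVal, vecVal, heq] at h
    omega

lemma add_ne_zero_and_leadPos_add_of_vecVal_lt {a b : Fin n → F[X]} (ha : a ≠ 0) (hb : b ≠ 0)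
    (h : vecVal b < vecVal a) : a + b ≠ 0 ∧ leadPos (a + b) = leadPos a := by
  obtain ⟨i, hiLP, hi⟩ := exists_index_eq_leadPos ha
  have hdom := vecDeg_lt_or_leadPos_lt_of_vecVal_lt ha hb h
  have hbD : ∀ j, (b j).degree ≤ vecDeg a := fun j =>
    (degree_le_vecDeg b j).trans <| by
      rcases hdom with hlt | ⟨heq, -⟩
      exacts [hlt.le, heq.le]
  have hbD' : ∀ j, i ≤ j → (b j).degree < vecDeg a := fun j hj => by
    rcases hdom with hlt | ⟨heq, hLP⟩
    · exact (degree_le_vecDeg b j).trans_lt hlt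
    · exact heq ▸ degree_lt_vecDeg_of_leadPos_lt (hLP.trans_le (hiLP ▸ hj))
  have hsum_i : ((a + b) i).degree = vecDeg a := by
    rw [Pi.add_apply, degree_add_eq_left_of_degree_lt (hi ▸ hbD' i le_rfl), hi]
  have hlp := leadPos_eq_of_degree_lt
    (fun j => (degree_add_le _ _).trans (max_le (degree_le_vecDeg a j) (hbD j))) hsum_i
    fun j hj => (degree_add_le _ _).trans_lt
      (max_lt (degree_lt_vecDeg_of_leadPos_lt (hiLP ▸ hj)) (hbD' j hj.le))
  refine ⟨fun h0 => vecDeg_ne_bot ha ?_, hlp.trans hiLP⟩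
  rw [← hsum_i, h0, Pi.zero_apply, degree_zero]

theorem stmt6 (ℓ : ℕ) (u v : Fin (ℓ+1) → Polynomial F) (hu : u ≠ 0) (hv : v ≠ 0)
    (hLP : leadPos u ≠ leadPos v) (p q : Polynomial F) (hp : p ≠ 0) (hq : q ≠ 0) :
    p • u + q • v ≠ 0 ∧
      (leadPos (p • u) ≠ leadPos (q • v) →
        leadPos (p • u + q • v) =
          if vecVal (q • v) < vecVal (p • u) then leadPos (p • u)
          else leadPos (q • v)) := by
  have ha : p • u ≠ 0 := smul_ne_zero hp hu
  have hb : q • v ≠ 0 := smul_ne_zero hq hv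
  have hval : vecVal (p • u) ≠ vecVal (q • v) := fun h => hLP <| by
    rw [← leadPos_smul hp hu, ← leadPos_smul hq hv, ← vecVal_mod ha, ← vecVal_mod hb, h]
  rcases hval.lt_or_gt with hlt | hgt
  · obtain ⟨hne, hlp⟩ := add_ne_zero_and_leadPos_add_of_vecVal_lt hb ha hlt
    rw [add_comm (q • v)] at hne hlp
    exact ⟨hne, fun _ => by rw [if_neg hlt.not_gt, hlp]⟩
  · obtain ⟨hne, hlp⟩ := add_ne_zero_and_leadPos_add_of_vecVal_lt ha hb hgt
    exact ⟨hne, fun _ => by rw [if_pos hgt, hlp]⟩
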